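/- arXiv:1403.7491 — 2 statements merged into one kernel-verified Lean document; each statement's English description precedes it below -/
import Mathlib

section
/- For all z ∈ (-1,1) and all x ∈ (-1,1), one has the identity ∫_{-z}^{z} G(x,y) dy = (z-x)·G(x,z) + (z+x)·G(x,-z) + (2/π)·√(1-x²)·arcsin(z). -/
/-- The Green function of the square root of the Laplacian on `(-1,1)`
with homogeneous Dirichlet exterior condition. -/
noncomputable def G (x y : ℝ) : ℝ :=
  if x ∈ Set.Ioo (-1:ℝ) 1 ∧ y ∈ Set.Ioo (-1:ℝ) 1 then
    (1 / Real.pi) * Real.log ((1 - x*y + Real.sqrt ((1 - x^2) * (1 - y^2))) / |x - y|)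
  else 0

/-!
Away from the diagonal, `π G(x, y) = log N(y) - log (y - x)` with
`N(y) = 1 - x y + √(1 - x²) √(1 - y²)`, and
`F(y) = (y - x) G(x, y) + π⁻¹ √(1 - x²) arcsin y` is a primitive of `G(x, ·)`:
differentiating the factor `y - x` returns `G`, and the remaining terms cancel because
`(y - x) N'(y) + (√(1 - x²) / √(1 - y²)) N(y) = N(y)`.
`F` is continuous across the logarithmic singularity `y = x`, so the fundamental theorem of
calculus (off the single point `x`) gives `∫_{-z}^{z} G(x, y) dy = F(z) - F(-z)`, which is the
claimed identity since `arcsin` is odd.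
-/

open Real Set MeasureTheory

noncomputable def greenNumerator (x y : ℝ) : ℝ :=
  1 - x * y + √(1 - x ^ 2) * √(1 - y ^ 2)

noncomputable def greenPrimitive (x y : ℝ) : ℝ :=
  (y - x) * (π⁻¹ * (log (greenNumerator x y) - log (y - x)))
    + π⁻¹ * √(1 - x ^ 2) * arcsin y

lemma one_sub_sq_pos_of_mem_Ioo {x : ℝ} (hx : x ∈ Ioo (-1 : ℝ) 1) : 0 < 1 - x ^ 2 := by
  nlinarith [hx.1, hx.2]

lemma greenNumerator_pos {x y : ℝ} (hx : x ∈ Ioo (-1 : ℝ) 1) (hy : y ∈ Ioo (-1 : ℝ) 1) :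
    0 < greenNumerator x y := by
  have : 0 ≤ √(1 - x ^ 2) * √(1 - y ^ 2) := by positivity
  unfold greenNumerator
  nlinarith [hx.1, hx.2, hy.1, hy.2]

lemma continuous_greenNumerator (x : ℝ) : Continuous (greenNumerator x) := by
  unfold greenNumerator
  fun_prop

lemma hasDerivAt_greenNumerator {x y : ℝ} (hy : y ∈ Ioo (-1 : ℝ) 1) :
    HasDerivAt (greenNumerator x) (-x - √(1 - x ^ 2) * y / √(1 - y ^ 2)) y := by
  have hsqrt : HasDerivAt (fun t : ℝ => √(1 - t ^ 2)) (-y / √(1 - y ^ 2)) y := by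
    convert ((hasDerivAt_pow 2 y).const_sub 1).sqrt (one_sub_sq_pos_of_mem_Ioo hy).ne' using 1
    ring
  refine (((hasDerivAt_id y).const_mul x).const_sub 1 |>.add
    (hsqrt.const_mul (√(1 - x ^ 2)))).congr_deriv ?_
  ring

lemma G_eq_log_sub_log {x y : ℝ} (hx : x ∈ Ioo (-1 : ℝ) 1) (hy : y ∈ Ioo (-1 : ℝ) 1)
    (hyx : y ≠ x) : G x y = π⁻¹ * (log (greenNumerator x y) - log (y - x)) := by
  have hN := greenNumerator_pos hx hy
  unfold greenNumerator at hN ⊢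
  rw [G, if_pos ⟨hx, hy⟩, sqrt_mul (one_sub_sq_pos_of_mem_Ioo hx).le, one_div,
    log_div hN.ne' (abs_ne_zero.mpr (sub_ne_zero.mpr hyx.symm)), abs_sub_comm, log_abs]

lemma greenPrimitive_eq {x y : ℝ} (hx : x ∈ Ioo (-1 : ℝ) 1) (hy : y ∈ Ioo (-1 : ℝ) 1) :
    greenPrimitive x y = (y - x) * G x y + π⁻¹ * √(1 - x ^ 2) * arcsin y := by
  rcases eq_or_ne y x with rfl | hyx
  · simp [greenPrimitive]
  · rw [greenPrimitive, G_eq_log_sub_log hx hy hyx]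

lemma hasDerivAt_greenPrimitive {x y : ℝ} (hx : x ∈ Ioo (-1 : ℝ) 1)
    (hy : y ∈ Ioo (-1 : ℝ) 1) (hyx : y ≠ x) : HasDerivAt (greenPrimitive x) (G x y) y := by
  have hb : 0 < √(1 - y ^ 2) := sqrt_pos.mpr (one_sub_sq_pos_of_mem_Ioo hy)
  have hN : 0 < greenNumerator x y := greenNumerator_pos hx hy
  have hlog := ((hasDerivAt_greenNumerator hy).log hN.ne').sub
    (((hasDerivAt_id y).sub_const x).log (sub_ne_zero.mpr hyx))
  have harcsin : HasDerivAt arcsin (1 / √(1 - y ^ 2)) y := hasDerivAt_arcsin hy.1.ne' hy.2.ne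
  have hcancel : (y - x) * (-x * √(1 - y ^ 2) - √(1 - x ^ 2) * y)
      + √(1 - x ^ 2) * greenNumerator x y = √(1 - y ^ 2) * greenNumerator x y := by
    have ha2 := sq_sqrt (one_sub_sq_pos_of_mem_Ioo hx).le
    have hb2 := sq_sqrt (one_sub_sq_pos_of_mem_Ioo hy).le
    unfold greenNumerator
    linear_combination √(1 - y ^ 2) * ha2 - √(1 - x ^ 2) * hb2
  refine (((hasDerivAt_id y).sub_const x).mul (hlog.const_mul π⁻¹) |>.add
    (harcsin.const_mul (π⁻¹ * √(1 - x ^ 2)))).congr_deriv ?_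
  rw [G_eq_log_sub_log hx hy hyx]
  simp only [Pi.sub_apply, id]
  field_simp
  linear_combination hcancel

lemma continuousOn_log_greenNumerator {x : ℝ} (hx : x ∈ Ioo (-1 : ℝ) 1) :
    ContinuousOn (fun y => log (greenNumerator x y)) (Ioo (-1) 1) :=
  (continuous_greenNumerator x).continuousOn.log fun _ hy => (greenNumerator_pos hx hy).ne'

lemma continuousOn_greenPrimitive {x : ℝ} (hx : x ∈ Ioo (-1 : ℝ) 1) :
    ContinuousOn (greenPrimitive x) (Ioo (-1) 1) := by
  have hlogN := continuousOn_log_greenNumerator hx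
  -- `t log t` extends continuously to `t = 0`, which absorbs the singularity at `y = x`
  have hmulLog : Continuous fun y => (y - x) * log (y - x) :=
    continuous_mul_log.comp (continuous_sub_right x)
  have hF : greenPrimitive x = fun y => π⁻¹ * ((y - x) * log (greenNumerator x y))
      - π⁻¹ * ((y - x) * log (y - x)) + π⁻¹ * √(1 - x ^ 2) * arcsin y := by
    funext y
    rw [greenPrimitive]
    ring
  rw [hF]
  exact ((continuousOn_const.mul ((continuous_sub_right x).continuousOn.mul hlogN)).sub
    (continuous_const.mul hmulLog).continuousOn).add
    (continuous_const.mul continuous_arcsin).continuousOn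

lemma intervalIntegrable_G {x a b : ℝ} (hx : x ∈ Ioo (-1 : ℝ) 1) (ha : a ∈ Ioo (-1 : ℝ) 1)
    (hb : b ∈ Ioo (-1 : ℝ) 1) : IntervalIntegrable (G x) volume a b := by
  have hab : uIcc a b ⊆ Ioo (-1) 1 := ordConnected_Ioo.uIcc_subset ha hb
  have hlogN := ((continuousOn_log_greenNumerator hx).mono hab).intervalIntegrable (μ := volume)
  have hlog : IntervalIntegrable (fun y => log (y - x)) volume a b := by
    simpa using
      (intervalIntegral.intervalIntegrable_log' (a := a - x) (b := b - x)).comp_sub_right x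
  refine ((hlogN.sub hlog).const_mul π⁻¹).congr_ae ?_
  filter_upwards [ae_restrict_mem measurableSet_uIoc,
    ae_restrict_of_ae ((countable_singleton x).ae_notMem volume)] with y hy hyx
  exact (G_eq_log_sub_log hx (hab (uIoc_subset_uIcc hy)) hyx).symm

lemma integral_G_eq_sub {x a b : ℝ} (hx : x ∈ Ioo (-1 : ℝ) 1) (ha : a ∈ Ioo (-1 : ℝ) 1)
    (hb : b ∈ Ioo (-1 : ℝ) 1) :
    ∫ y in a..b, G x y = greenPrimitive x b - greenPrimitive x a := by
  have hab : uIcc a b ⊆ Ioo (-1) 1 := ordConnected_Ioo.uIcc_subset ha hb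
  exact integral_eq_of_hasDerivAt_off_countable _ _ (countable_singleton x)
    ((continuousOn_greenPrimitive hx).mono hab)
    (fun y hy => hasDerivAt_greenPrimitive hx (hab (Ioo_subset_Icc_self hy.1)) hy.2)
    (intervalIntegrable_G hx ha hb)

theorem stmt_1 (x z : ℝ) (hx : x ∈ Set.Ioo (-1:ℝ) 1) (hz : z ∈ Set.Ioo (-1:ℝ) 1) :
    ∫ y in -z..z, G x y =
      (z - x) * G x z + (z + x) * G x (-z)
        + (2 / Real.pi) * Real.sqrt (1 - x^2) * Real.arcsin z := by
  have hz' : -z ∈ Ioo (-1 : ℝ) 1 := ⟨by linarith [hz.2], by linarith [hz.1]⟩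
  rw [integral_G_eq_sub hx hz' hz, greenPrimitive_eq hx hz, greenPrimitive_eq hx hz', arcsin_neg]
  ring
end

section
/- For all x, z ∈ (-1,1) one has |g(x,z)| ≤ (1/π)·√(1-x²)·√(1-z²), and for all x, z ∈ (-1,1) with x ≠ z and x ≠ -z one has |∂g/∂x (x,z)| ≤ (1/(2π))·ln( 1 + 4·√(1-x²)·√(1-z²)/|z²-x²| ). -/
/-- The Green function `g(x,z)` for the operator `u ↦ (I u)'` on `(-1,1)`. -/
noncomputable def g (x z : ℝ) : ℝ :=
  if x ∈ Set.Ioo (-1:ℝ) 1 then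
    (1/2) * ((z - x) * G x z + (z + x) * G x (-z))
  else 0

open Real Set Topology

lemma Real.log_le_sub_inv_div_two {r : ℝ} (hr : 1 ≤ r) : log r ≤ (r - r⁻¹) / 2 :=
  calc log r ≤ sinh (log r) := self_le_sinh_iff.mpr (log_nonneg hr)
    _ = (r - r⁻¹) / 2 := sinh_log (by linarith)

lemma Real.mul_log_div_le {s N : ℝ} (hs : 0 ≤ s) (hsN : s ≤ N) :
    s * log (N / s) ≤ (N - s ^ 2 / N) / 2 := by
  rcases hs.eq_or_lt with rfl | hs
  · simpa using div_nonneg hsN zero_le_two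
  calc s * log (N / s) ≤ s * ((N / s - (N / s)⁻¹) / 2) := by
        gcongr
        exact log_le_sub_inv_div_two ((one_le_div hs).mpr hsN)
    _ = (N - s ^ 2 / N) / 2 := by
        have : N ≠ 0 := by linarith
        field_simp

section Algebra

variable {x y b : ℝ}

lemma one_sub_mul_pos (hx : x ∈ Ioo (-1 : ℝ) 1) (hy : y ∈ Ioo (-1 : ℝ) 1) : 0 < 1 - x * y := by
  nlinarith [hx.1, hx.2, hy.1, hy.2]

lemma sub_sq_eq_mul (hb : b ^ 2 = (1 - x ^ 2) * (1 - y ^ 2)) :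
    (x - y) ^ 2 = (1 - x * y + b) * (1 - x * y - b) := by
  linear_combination hb

lemma abs_sub_le_one_sub_mul_add (hx : x ∈ Ioo (-1 : ℝ) 1) (hy : y ∈ Ioo (-1 : ℝ) 1)
    (hb : b ^ 2 = (1 - x ^ 2) * (1 - y ^ 2)) (hb0 : 0 ≤ b) : |x - y| ≤ 1 - x * y + b := by
  have := one_sub_mul_pos hx hy
  apply abs_le_of_sq_le_sq _ (by positivity)
  nlinarith [sub_sq_eq_mul hb]

lemma abs_sub_mul_log_le (hx : x ∈ Ioo (-1 : ℝ) 1) (hy : y ∈ Ioo (-1 : ℝ) 1)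
    (hb : b ^ 2 = (1 - x ^ 2) * (1 - y ^ 2)) (hb0 : 0 ≤ b) :
    |x - y| * log ((1 - x * y + b) / |x - y|) ≤ b := by
  have hN : 0 < 1 - x * y + b := by linarith [one_sub_mul_pos hx hy]
  calc |x - y| * log ((1 - x * y + b) / |x - y|)
      ≤ ((1 - x * y + b) - |x - y| ^ 2 / (1 - x * y + b)) / 2 :=
        mul_log_div_le (abs_nonneg _) (abs_sub_le_one_sub_mul_add hx hy hb hb0)
    _ = b := by
        rw [sq_abs, sub_sq_eq_mul hb]
        field_simp
        ring

lemma one_add_mul_add_mul_one_sub_mul_sub_le (hx : x ∈ Ioo (-1 : ℝ) 1) (hy : y ∈ Ioo (-1 : ℝ) 1)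
    (hb : b ^ 2 = (1 - x ^ 2) * (1 - y ^ 2)) (hb0 : 0 ≤ b) :
    (1 + x * y + b) * (1 - x * y - b) ≤ |x ^ 2 - y ^ 2| + 4 * b := by
  have hx2 : 0 ≤ 1 - x ^ 2 := by nlinarith [hx.1, hx.2]
  have hy2 : 0 ≤ 1 - y ^ 2 := by nlinarith [hy.1, hy.2]
  have hxyb : -(x * y * b) ≤ b := by
    have : 0 ≤ (1 + x * y) * b := mul_nonneg (by nlinarith [hx.1, hx.2, hy.1, hy.2]) hb0
    linarith
  rcases le_total (y ^ 2) (x ^ 2) with h | h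
  · have : 1 - x ^ 2 ≤ b := by
      refine (sq_le_sq₀ hx2 hb0).mp ?_
      nlinarith [mul_nonneg hx2 (sub_nonneg.mpr h)]
    rw [abs_of_nonneg (by linarith)]
    nlinarith
  · have : 1 - y ^ 2 ≤ b := by
      refine (sq_le_sq₀ hy2 hb0).mp ?_
      nlinarith [mul_nonneg hy2 (sub_nonneg.mpr h)]
    rw [abs_of_nonpos (by linarith)]
    nlinarith

lemma log_div_sub_log_div_le (hx : x ∈ Ioo (-1 : ℝ) 1) (hy : y ∈ Ioo (-1 : ℝ) 1)
    (hxy : x ≠ y) (hxy' : x ≠ -y) (hb : b ^ 2 = (1 - x ^ 2) * (1 - y ^ 2)) (hb0 : 0 ≤ b) :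
    log ((1 + x * y + b) / |x + y|) - log ((1 - x * y + b) / |x - y|)
      ≤ log (1 + 4 * b / |x ^ 2 - y ^ 2|) := by
  have hN : 0 < 1 - x * y + b := by linarith [one_sub_mul_pos hx hy]
  have hM : 0 < 1 + x * y + b := by nlinarith [hx.1, hx.2, hy.1, hy.2]
  have hp : 0 < |x - y| := abs_pos.mpr (sub_ne_zero.mpr hxy)
  have hq : 0 < |x + y| := abs_pos.mpr fun h => hxy' (eq_neg_of_add_eq_zero_left h)
  have hpq : |x ^ 2 - y ^ 2| = |x - y| * |x + y| := by rw [← abs_mul]; ring_nf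
  have hp2 : |x - y| ^ 2 = (1 - x * y + b) * (1 - x * y - b) := by rw [sq_abs, sub_sq_eq_mul hb]
  rw [← log_div (by positivity) (by positivity)]
  refine log_le_log (by positivity) ?_
  calc (1 + x * y + b) / |x + y| / ((1 - x * y + b) / |x - y|)
      = (1 + x * y + b) * (1 - x * y - b) / (|x - y| * |x + y|) := by
        rw [div_div_div_eq, div_eq_div_iff (by positivity) (by positivity)]
        linear_combination ((1 + x * y + b) * |x + y|) * hp2
    _ ≤ (|x - y| * |x + y| + 4 * b) / (|x - y| * |x + y|) := by
        gcongr
        rw [← hpq]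
        exact one_add_mul_add_mul_one_sub_mul_sub_le hx hy hb hb0
    _ = 1 + 4 * b / |x ^ 2 - y ^ 2| := by
        rw [hpq]
        field_simp

end Algebra

section Green

variable {x y z : ℝ}

lemma one_sub_sq_mul_one_sub_sq_pos (hx : x ∈ Ioo (-1 : ℝ) 1) (hy : y ∈ Ioo (-1 : ℝ) 1) :
    0 < (1 - x ^ 2) * (1 - y ^ 2) :=
  mul_pos (by nlinarith [hx.1, hx.2]) (by nlinarith [hy.1, hy.2])

lemma sq_sqrt_one_sub_sq_mul (hx : x ∈ Ioo (-1 : ℝ) 1) (hy : y ∈ Ioo (-1 : ℝ) 1) :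
    √((1 - x ^ 2) * (1 - y ^ 2)) ^ 2 = (1 - x ^ 2) * (1 - y ^ 2) :=
  sq_sqrt (one_sub_sq_mul_one_sub_sq_pos hx hy).le

lemma G_nonneg (hx : x ∈ Ioo (-1 : ℝ) 1) (hy : y ∈ Ioo (-1 : ℝ) 1) : 0 ≤ G x y := by
  rw [G, if_pos ⟨hx, hy⟩]
  refine mul_nonneg (by positivity) ?_
  rcases eq_or_ne x y with rfl | hxy
  · simp
  · refine log_nonneg ((one_le_div (abs_pos.mpr (sub_ne_zero.mpr hxy))).mpr ?_)
    exact abs_sub_le_one_sub_mul_add hx hy (sq_sqrt_one_sub_sq_mul hx hy) (sqrt_nonneg _)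

lemma abs_sub_mul_G_le (hx : x ∈ Ioo (-1 : ℝ) 1) (hy : y ∈ Ioo (-1 : ℝ) 1) :
    |x - y| * G x y ≤ √((1 - x ^ 2) * (1 - y ^ 2)) / π := by
  rw [G, if_pos ⟨hx, hy⟩, mul_left_comm, one_div_mul_eq_div]
  gcongr
  exact abs_sub_mul_log_le hx hy (sq_sqrt_one_sub_sq_mul hx hy) (sqrt_nonneg _)

lemma abs_g_le (hx : x ∈ Ioo (-1 : ℝ) 1) (hz : z ∈ Ioo (-1 : ℝ) 1) :
    |g x z| ≤ √((1 - x ^ 2) * (1 - z ^ 2)) / π := by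
  have hz' : -z ∈ Ioo (-1 : ℝ) 1 := neg_mem_Ioo_iff.mpr (by rwa [neg_neg])
  have h₁ := abs_sub_mul_G_le hx hz
  have h₂ := abs_sub_mul_G_le hx hz'
  rw [neg_sq, sub_neg_eq_add, add_comm] at h₂
  rw [abs_sub_comm] at h₁
  rw [g, if_pos hx, abs_mul, abs_of_pos one_half_pos]
  calc 1 / 2 * |(z - x) * G x z + (z + x) * G x (-z)|
      ≤ 1 / 2 * (|z - x| * G x z + |z + x| * G x (-z)) := by
        gcongr
        refine (abs_add_le _ _).trans_eq ?_
        rw [abs_mul, abs_mul, abs_of_nonneg (G_nonneg hx hz), abs_of_nonneg (G_nonneg hx hz')]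
    _ ≤ √((1 - x ^ 2) * (1 - z ^ 2)) / π := by linarith

lemma G_neg_sub_G_le (hx : x ∈ Ioo (-1 : ℝ) 1) (hy : y ∈ Ioo (-1 : ℝ) 1)
    (hxy : x ≠ y) (hxy' : x ≠ -y) :
    G x (-y) - G x y ≤ 1 / π * log (1 + 4 * √((1 - x ^ 2) * (1 - y ^ 2)) / |x ^ 2 - y ^ 2|) := by
  have hy' : -y ∈ Ioo (-1 : ℝ) 1 := neg_mem_Ioo_iff.mpr (by rwa [neg_neg])
  rw [G, G, if_pos ⟨hx, hy'⟩, if_pos ⟨hx, hy⟩, ← mul_sub, neg_sq, mul_neg, sub_neg_eq_add,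
    sub_neg_eq_add]
  gcongr
  exact log_div_sub_log_div_le hx hy hxy hxy' (sq_sqrt_one_sub_sq_mul hx hy) (sqrt_nonneg _)

lemma abs_G_neg_sub_G_le (hx : x ∈ Ioo (-1 : ℝ) 1) (hy : y ∈ Ioo (-1 : ℝ) 1)
    (hxy : x ≠ y) (hxy' : x ≠ -y) :
    |G x (-y) - G x y| ≤ 1 / π * log (1 + 4 * √((1 - x ^ 2) * (1 - y ^ 2)) / |x ^ 2 - y ^ 2|) := by
  have hy' : -y ∈ Ioo (-1 : ℝ) 1 := neg_mem_Ioo_iff.mpr (by rwa [neg_neg])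
  have h := G_neg_sub_G_le hx hy' hxy' (by rwa [neg_neg])
  rw [neg_neg, neg_sq] at h
  exact abs_le.mpr ⟨by linarith, G_neg_sub_G_le hx hy hxy hxy'⟩

lemma hasDerivAt_G_left (hx : x ∈ Ioo (-1 : ℝ) 1) (hy : y ∈ Ioo (-1 : ℝ) 1) (hxy : x ≠ y) :
    HasDerivAt (fun t => G t y) ((1 - y ^ 2) / (π * (y - x) * √((1 - x ^ 2) * (1 - y ^ 2)))) x := by
  have hb := sq_sqrt_one_sub_sq_mul hx hy
  have hb0 : 0 < √((1 - x ^ 2) * (1 - y ^ 2)) := sqrt_pos.mpr (one_sub_sq_mul_one_sub_sq_pos hx hy)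
  have hN : 0 < 1 - x * y + √((1 - x ^ 2) * (1 - y ^ 2)) := by linarith [one_sub_mul_pos hx hy]
  have hEq : (fun t => G t y) =ᶠ[𝓝 x]
      fun t => π⁻¹ * (log (1 - t * y + √((1 - t ^ 2) * (1 - y ^ 2))) - log (t - y)) := by
    filter_upwards [isOpen_Ioo.mem_nhds hx, isOpen_compl_singleton.mem_nhds hxy] with t ht hty
    have : 0 < 1 - t * y + √((1 - t ^ 2) * (1 - y ^ 2)) := by
      linarith [one_sub_mul_pos ht hy, sqrt_nonneg ((1 - t ^ 2) * (1 - y ^ 2))]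
    rw [G, if_pos ⟨ht, hy⟩, log_div this.ne' (abs_ne_zero.mpr (sub_ne_zero.mpr hty)), log_abs,
      one_div]
  have hsqrt : HasDerivAt (fun t => √((1 - t ^ 2) * (1 - y ^ 2)))
      (-(2 * x) * (1 - y ^ 2) / (2 * √((1 - x ^ 2) * (1 - y ^ 2)))) x := by
    simpa using (((hasDerivAt_pow 2 x).const_sub 1).mul_const (1 - y ^ 2)).sqrt
      (one_sub_sq_mul_one_sub_sq_pos hx hy).ne'
  have hN_deriv : HasDerivAt (fun t => 1 - t * y + √((1 - t ^ 2) * (1 - y ^ 2)))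
      (-y + -(2 * x) * (1 - y ^ 2) / (2 * √((1 - x ^ 2) * (1 - y ^ 2)))) x :=
    ((hasDerivAt_mul_const y).const_sub 1).add hsqrt
  have hlog : HasDerivAt (fun t => log (t - y)) (1 / (x - y)) x := by
    simpa using ((hasDerivAt_id x).sub_const y).log (sub_ne_zero.mpr hxy)
  refine (((hN_deriv.log hN.ne').sub hlog).const_mul π⁻¹
    |>.congr_of_eventuallyEq hEq).congr_deriv ?_
  generalize √((1 - x ^ 2) * (1 - y ^ 2)) = b at hb hb0 hN ⊢
  have hN' : 1 - y * x + b ≠ 0 := by linarith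
  field_simp
  linear_combination (x - y) * hb

lemma hasDerivAt_g (hx : x ∈ Ioo (-1 : ℝ) 1) (hz : z ∈ Ioo (-1 : ℝ) 1) (hxz : x ≠ z)
    (hxz' : x ≠ -z) : HasDerivAt (fun t => g t z) ((G x (-z) - G x z) / 2) x := by
  have hz' : -z ∈ Ioo (-1 : ℝ) 1 := neg_mem_Ioo_iff.mpr (by rwa [neg_neg])
  have hEq : (fun t => g t z) =ᶠ[𝓝 x] fun t => 1 / 2 * ((z - t) * G t z + (z + t) * G t (-z)) := by
    filter_upwards [isOpen_Ioo.mem_nhds hx] with t ht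
    rw [g, if_pos ht]
  have h₁ := ((hasDerivAt_id' x).const_sub z).mul (hasDerivAt_G_left hx hz hxz)
  have h₂ := ((hasDerivAt_id' x).const_add z).mul (hasDerivAt_G_left hx hz' hxz')
  refine ((h₁.add h₂).const_mul (1 / 2) |>.congr_of_eventuallyEq hEq).congr_deriv ?_
  rw [neg_sq]
  field_simp
  ring

end Green

theorem stmt_6 :
    (∀ x ∈ Set.Ioo (-1:ℝ) 1, ∀ z ∈ Set.Ioo (-1:ℝ) 1,
      |g x z| ≤ (1 / Real.pi) * Real.sqrt (1 - x^2) * Real.sqrt (1 - z^2)) ∧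
    (∀ x ∈ Set.Ioo (-1:ℝ) 1, ∀ z ∈ Set.Ioo (-1:ℝ) 1, x ≠ z → x ≠ -z →
      |deriv (fun t => g t z) x| ≤
        (1 / (2 * Real.pi)) *
          Real.log (1 + 4 * Real.sqrt (1 - x^2) * Real.sqrt (1 - z^2) / |z^2 - x^2|)) := by
  have sqrt_prod {x z : ℝ} (hx : x ∈ Ioo (-1 : ℝ) 1) :
      √((1 - x ^ 2) * (1 - z ^ 2)) = √(1 - x ^ 2) * √(1 - z ^ 2) :=
    sqrt_mul (by nlinarith [hx.1, hx.2]) _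
  refine ⟨fun x hx z hz => ?_, fun x hx z hz hxz hxz' => ?_⟩
  · calc |g x z| ≤ √((1 - x ^ 2) * (1 - z ^ 2)) / π := abs_g_le hx hz
      _ = 1 / π * √(1 - x ^ 2) * √(1 - z ^ 2) := by rw [sqrt_prod hx]; ring
  · rw [(hasDerivAt_g hx hz hxz hxz').deriv, abs_div, abs_two, abs_sub_comm (z ^ 2),
      mul_assoc 4, ← sqrt_prod hx]
    calc |G x (-z) - G x z| / 2
        ≤ 1 / π * log (1 + 4 * √((1 - x ^ 2) * (1 - z ^ 2)) / |x ^ 2 - z ^ 2|) / 2 := by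
          gcongr
          exact abs_G_neg_sub_G_le hx hz hxz hxz'
      _ = _ := by ring
end
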